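/- Let X ⊆ ℝ² be the comb-like space X = ({0} ∪ {1/n : n ∈ ℕ, n ≥ 1}) × [0,1] ∪ [0,1] × {0} ∪ [0,1] × {1}, with basepoint p = (0,0). Then the topological fundamental group π₁(X,p), defined as the quotient of the loop space C_p(X) (with uniform convergence topology) by path components, does not have the discrete topology, even though X is semilocally simply connected at every point. -/

import Mathlib

open Topology Filter unitInterval

/-- `X` is semilocally simply connected at `p`: some open neighborhood `U` of `p` is such
that every loop at `p` contained in `U` is null-homotopic (rel endpoints) in `X`. -/
def SemilocallySimplyConnectedAt (X : Type*) [TopologicalSpace X] (p : X) : Prop :=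
  ∃ U : Set X, IsOpen U ∧ p ∈ U ∧
    ∀ γ : Path p p, (∀ t, γ t ∈ U) → γ.Homotopic (Path.refl p)

/-- The comb-like space of the paper. -/
def comb : Set (ℝ × ℝ) :=
  (({0} ∪ {x : ℝ | ∃ n : ℕ, 1 ≤ n ∧ x = 1 / n}) ×ˢ Set.Icc 0 1) ∪
    (Set.Icc 0 1 ×ˢ ({0} : Set ℝ)) ∪ (Set.Icc 0 1 ×ˢ ({1} : Set ℝ))

lemma combP_mem : ((0 : ℝ), (0 : ℝ)) ∈ comb :=
  Or.inl (Or.inr ⟨⟨le_refl _, zero_le_one⟩, rfl⟩)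

/-- The basepoint `p = (0,0)` of the comb space. -/
def combP : comb := ⟨(0, 0), combP_mem⟩

/-!
The loop `ℓ c` running around the rectangle `[0, c] × [0, 1]` of the comb depends continuously
on the tooth `c`, so `ℓ (1/(n+1)) → ℓ 0` in the loop space. If `π₁` were discrete, path
components of the loop space would be open, and `ℓ (1/(n+1))` would be joined, hence homotopic,
to `ℓ 0`. It is not: sending everything left of the tooth `1/(n+2)` onto that tooth and everything
right of `1/(n+1)` onto that one retracts the comb onto the boundary of a rectangle, i.e. a circle,
and lifting to `ℝ` shows that `ℓ (1/(n+1))` winds once around it while `ℓ 0` does not.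

Near a point of a horizontal bar, a loop can be pushed vertically onto the bar and then contracted
along it. Near any other point a loop cannot leave its tooth, since there are only countably many.
-/

open Set

theorem Path.Homotopic.of_segment_subset {E : Type*} [AddCommGroup E] [Module ℝ E]
    [TopologicalSpace E] [IsTopologicalAddGroup E] [ContinuousSMul ℝ E] {S : Set E}
    {x y : S} {γ₀ γ₁ : Path x y} (h : ∀ t, segment ℝ (γ₀ t : E) (γ₁ t) ⊆ S) :
    γ₀.Homotopic γ₁ := by
  let F := ContinuousMap.Homotopy.affine (γ₀.map continuous_subtype_val).toContinuousMap
    (γ₁.map continuous_subtype_val).toContinuousMap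
  refine ⟨{ toFun := fun st => ⟨F st, h st.2 ?_⟩
            continuous_toFun := F.continuous.subtype_mk _
            map_zero_left := fun t => by ext; simp [F]
            map_one_left := fun t => by ext; simp [F]
            prop' := ?_ }⟩
  · rw [← Path.range_segment]; exact ⟨st.1, rfl⟩
  · rintro s t (rfl | rfl) <;> ext <;> simp [F]

theorem IsCoveringMap.eq_of_homotopic_of_lifts {E X : Type*} [TopologicalSpace E]
    [TopologicalSpace X] {p : E → X} (cov : IsCoveringMap p) {x y : X} {γ₀ γ₁ : Path x y}
    (h : γ₀.Homotopic γ₁) {Γ₀ Γ₁ : C(I, E)} (hΓ₀ : ∀ t, p (Γ₀ t) = γ₀ t)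
    (hΓ₁ : ∀ t, p (Γ₁ t) = γ₁ t) (h0 : Γ₀ 0 = Γ₁ 0) : Γ₀ 1 = Γ₁ 1 := by
  have e₀ : γ₀.toContinuousMap 0 = p (Γ₀ 0) := (hΓ₀ 0).symm
  have e₁ : γ₁.toContinuousMap 0 = p (Γ₀ 0) := by rw [h0]; exact (hΓ₁ 0).symm
  rw [(cov.eq_liftPath_iff' e₀).2 ⟨funext hΓ₀, rfl⟩,
    (cov.eq_liftPath_iff' e₁).2 ⟨funext hΓ₁, h0.symm⟩]
  exact cov.liftPath_apply_one_eq_of_homotopicRel h _ e₀ e₁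

theorem Path.Homotopic.of_joined {X : Type*} [TopologicalSpace X] {x y : X} {γ₀ γ₁ : Path x y}
    (h : Joined γ₀ γ₁) : γ₀.Homotopic γ₁ := by
  obtain ⟨ρ⟩ := h
  exact ⟨{ toFun := fun st => ρ st.1 st.2
           continuous_toFun := by fun_prop
           map_zero_left := by simp
           map_one_left := by simp
           prop' := by rintro s t (rfl | rfl) <;> simp }⟩

theorem isOpen_setOf_joined {X : Type*} [TopologicalSpace X]
    [DiscreteTopology (ZerothHomotopy X)] (x : X) : IsOpen {y | Joined y x} := by
  convert (isOpen_discrete {ZerothHomotopy.mk x}).preimage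
    ZerothHomotopy.isQuotientMap_mk.continuous using 1
  ext y
  exact (Quotient.eq (r := pathSetoid X)).symm

theorem Set.Countable.apply_eq_of_continuous {X : Type*} [TopologicalSpace X]
    [PreconnectedSpace X] {S : Set ℝ} (hS : S.Countable) {φ : X → ℝ} (hφ : Continuous φ)
    (hmem : ∀ t, φ t ∈ S) (s t : X) : φ s = φ t :=
  hS.isTotallyDisconnected _ (Set.range_subset_iff.2 hmem) (isPreconnected_range hφ)
    ⟨s, rfl⟩ ⟨t, rfl⟩

def combTeeth : Set ℝ := {0} ∪ {x : ℝ | ∃ n : ℕ, 1 ≤ n ∧ x = 1 / n}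

lemma zero_mem_combTeeth : (0 : ℝ) ∈ combTeeth := Or.inl rfl

noncomputable def combTooth (n : ℕ) : combTeeth :=
  ⟨1 / (n + 1), Or.inr ⟨n + 1, by omega, by push_cast; rfl⟩⟩

lemma combTeeth_subset_Icc : combTeeth ⊆ Icc 0 1 := by
  rintro x (rfl | ⟨n, hn, rfl⟩)
  · exact ⟨le_rfl, zero_le_one⟩
  · have : (1 : ℝ) ≤ n := by exact_mod_cast hn
    exact ⟨by positivity, (div_le_one (by positivity)).2 this⟩

lemma combTeeth_countable : combTeeth.Countable :=
  (countable_singleton 0).union <| Countable.mono (by rintro _ ⟨n, -, rfl⟩; exact ⟨n, rfl⟩)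
    (countable_range fun n : ℕ => 1 / (n : ℝ))

lemma tooth_subset_comb {x : ℝ} (hx : x ∈ combTeeth) : {x} ×ˢ Icc 0 1 ⊆ comb := by
  rintro ⟨x', y⟩ ⟨rfl, hy⟩
  exact Or.inl (Or.inl ⟨hx, hy⟩)

lemma bar_subset_comb {b : ℝ} (hb : b = 0 ∨ b = 1) : Icc 0 1 ×ˢ {b} ⊆ comb := by
  rcases hb with rfl | rfl
  exacts [fun _ h => Or.inl (Or.inr h), fun _ h => Or.inr h]

lemma comb_subset_Icc_prod : comb ⊆ Icc 0 1 ×ˢ Icc 0 1 := by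
  rintro z ((⟨hx, hy⟩ | ⟨hx, hy⟩) | ⟨hx, hy⟩)
  · exact ⟨combTeeth_subset_Icc hx, hy⟩
  all_goals exact ⟨hx, by rw [mem_singleton_iff.1 hy]; norm_num⟩

lemma mem_combTeeth_or_of_mem_comb {z : ℝ × ℝ} (hz : z ∈ comb) :
    z.1 ∈ combTeeth ∨ z.2 = 0 ∨ z.2 = 1 := by
  rcases hz with (⟨hx, -⟩ | ⟨-, hy⟩) | ⟨-, hy⟩
  exacts [Or.inl hx, Or.inr (Or.inl hy), Or.inr (Or.inr hy)]

lemma semilocallySimplyConnectedAt_comb_of_snd_mem_Ioo (z : comb)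
    (hz : (z : ℝ × ℝ).2 ∈ Ioo 0 1) : SemilocallySimplyConnectedAt comb z := by
  refine ⟨{w | (w : ℝ × ℝ).2 ∈ Ioo 0 1}, isOpen_Ioo.preimage (by fun_prop), hz, ?_⟩
  intro γ hγ
  have hteeth : ∀ t, (γ t : ℝ × ℝ).1 ∈ combTeeth := fun t =>
    (mem_combTeeth_or_of_mem_comb (γ t).2).resolve_right
      (by rintro (h | h) <;> simpa [h] using hγ t)
  have hfst : ∀ t, (γ t : ℝ × ℝ).1 = (z : ℝ × ℝ).1 := fun t => by
    simpa using combTeeth_countable.apply_eq_of_continuous (by fun_prop) hteeth t 0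
  have hz₁ : (z : ℝ × ℝ).1 ∈ combTeeth := by simpa using hteeth 0
  refine Path.Homotopic.of_segment_subset fun t => ?_
  refine (((convex_singleton _).prod (convex_Icc 0 1)).segment_subset ?_ ?_).trans
    (tooth_subset_comb hz₁)
  · exact ⟨hfst t, (comb_subset_Icc_prod (γ t).2).2⟩
  · exact ⟨rfl, (comb_subset_Icc_prod z.2).2⟩

lemma semilocallySimplyConnectedAt_comb_of_snd_eq (z : comb)
    (hz : (z : ℝ × ℝ).2 = 0 ∨ (z : ℝ × ℝ).2 = 1) : SemilocallySimplyConnectedAt comb z := by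
  set b := (z : ℝ × ℝ).2
  refine ⟨{w | |(w : ℝ × ℝ).2 - b| < 1}, isOpen_lt (by fun_prop) continuous_const, by simp [b], ?_⟩
  intro γ hγ
  let γbar : Path z z :=
    { toFun t := ⟨((γ t : ℝ × ℝ).1, b), bar_subset_comb hz ⟨(comb_subset_Icc_prod (γ t).2).1, rfl⟩⟩
      continuous_toFun := by fun_prop
      source' := by ext <;> simp [b]
      target' := by ext <;> simp [b] }
  refine Path.Homotopic.trans (p₁ := γbar) (Path.Homotopic.of_segment_subset fun t => ?_)
    (Path.Homotopic.of_segment_subset fun t => ?_)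
  · have hb : b ∈ Icc 0 1 := by rcases hz with h | h <;> simp [h]
    rcases mem_combTeeth_or_of_mem_comb (γ t).2 with hx | hy
    · refine (((convex_singleton _).prod (convex_Icc 0 1)).segment_subset ?_ ?_).trans
        (tooth_subset_comb hx)
      exacts [⟨rfl, (comb_subset_Icc_prod (γ t).2).2⟩, ⟨rfl, hb⟩]
    · have hyb : (γ t : ℝ × ℝ).2 = b := by
        have : |(γ t : ℝ × ℝ).2 - b| < 1 := hγ t
        rcases hz with h | h <;> rcases hy with h' | h' <;> rw [h', h] at this ⊢ <;>
          norm_num at this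
      have : (γ t : ℝ × ℝ) = (γbar t : ℝ × ℝ) := Prod.ext rfl hyb
      rw [this, segment_same, singleton_subset_iff]
      exact (γbar t).2
  · refine (((convex_Icc 0 1).prod (convex_singleton b)).segment_subset ?_ ?_).trans
      (bar_subset_comb hz)
    exacts [⟨(comb_subset_Icc_prod (γ t).2).1, rfl⟩, ⟨(comb_subset_Icc_prod z.2).1, rfl⟩]

theorem semilocallySimplyConnectedAt_comb (z : comb) : SemilocallySimplyConnectedAt comb z := by
  by_cases hz : (z : ℝ × ℝ).2 = 0 ∨ (z : ℝ × ℝ).2 = 1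
  · exact semilocallySimplyConnectedAt_comb_of_snd_eq z hz
  · rw [not_or] at hz
    have := (comb_subset_Icc_prod z.2).2
    exact semilocallySimplyConnectedAt_comb_of_snd_mem_Ioo z
      ⟨this.1.lt_of_ne' hz.1, this.2.lt_of_ne hz.2⟩

def toothRamp (n : ℕ) (x : ℝ) : ℝ := max 0 (min 1 ((n + 1) * (n + 2) * x - (n + 1)))

@[fun_prop]
lemma continuous_toothRamp (n : ℕ) : Continuous (toothRamp n) := by
  unfold toothRamp; fun_prop

lemma toothRamp_eq_zero {n : ℕ} {x : ℝ} (hx : x ≤ 1 / (n + 2)) : toothRamp n x = 0 := by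
  have : x * (n + 2) ≤ 1 := (le_div_iff₀ (by positivity)).1 hx
  exact max_eq_left (min_le_of_right_le (by nlinarith))

lemma toothRamp_eq_one {n : ℕ} {x : ℝ} (hx : 1 / (n + 1) ≤ x) : toothRamp n x = 1 := by
  have : 1 ≤ x * (n + 1) := (div_le_iff₀ (by positivity)).1 hx
  exact (congrArg _ (min_eq_left (by nlinarith))).trans (max_eq_right zero_le_one)

@[simp]
lemma toothRamp_zero (n : ℕ) : toothRamp n 0 = 0 := toothRamp_eq_zero (by positivity)

lemma toothRamp_eq_zero_or_one (n : ℕ) {x : ℝ} (hx : x ∈ combTeeth) :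
    toothRamp n x = 0 ∨ toothRamp n x = 1 := by
  rcases hx with rfl | ⟨m, hm, rfl⟩
  · exact Or.inl (toothRamp_zero n)
  rcases le_or_gt m (n + 1) with h | h
  · refine Or.inr (toothRamp_eq_one (one_div_le_one_div_of_le (by positivity) ?_))
    exact_mod_cast h
  · refine Or.inl (toothRamp_eq_zero (one_div_le_one_div_of_le (by positivity) ?_))
    exact_mod_cast h

/- Arc length, normalised to total length `1`, on the boundary of the unit square run through
`(0,0) → (0,1) → (1,1) → (1,0) → (0,0)`: `upperChart` is correct on the left, top and right
edges, `lowerChart` on the right, bottom and left ones (there shifted by `1`). Their difference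
is `a - 1`. -/
noncomputable def upperChart (a y : ℝ) : ℝ := (y + a * (3 - 2 * y)) / 4

noncomputable def lowerChart (a y : ℝ) : ℝ := (4 + y - a * (1 + 2 * y)) / 4

lemma coe_upperChart_eq_coe_lowerChart {a : ℝ} (ha : a = 0 ∨ a = 1) (y : ℝ) :
    (upperChart a y : AddCircle (1 : ℝ)) = lowerChart a y := by
  rcases ha with rfl | rfl
  · rw [show lowerChart 0 y = upperChart 0 y + 1 by simp only [upperChart, lowerChart]; ring,
      AddCircle.coe_add_period]
  · congr 1; simp only [upperChart, lowerChart]; ring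

/- `z ↦ (toothRamp n z.1, z.2)` retracts the comb onto the boundary of the unit square: the teeth
up to `1/(n+2)` go to its left edge, those from `1/(n+1)` on to its right edge. -/
noncomputable def combToCircle (n : ℕ) : C(comb, AddCircle (1 : ℝ)) where
  toFun z := if (z : ℝ × ℝ).2 ≤ 1 / 2 then lowerChart (toothRamp n (z : ℝ × ℝ).1) (z : ℝ × ℝ).2
    else upperChart (toothRamp n (z : ℝ × ℝ).1) (z : ℝ × ℝ).2
  continuous_toFun := by
    refine Continuous.if_le ((AddCircle.continuous_mk' 1).comp ?_)
      ((AddCircle.continuous_mk' 1).comp ?_) (by fun_prop) continuous_const fun z hz => ?_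
    · unfold lowerChart; fun_prop
    · unfold upperChart; fun_prop
    · have hz₁ : (z : ℝ × ℝ).1 ∈ combTeeth :=
        (mem_combTeeth_or_of_mem_comb z.2).resolve_right (by rw [hz]; norm_num)
      exact (coe_upperChart_eq_coe_lowerChart (toothRamp_eq_zero_or_one n hz₁) _).symm

lemma combToCircle_apply_eq_upperChart {n : ℕ} {z : comb}
    (hz : 1 / 2 < (z : ℝ × ℝ).2 ∨ toothRamp n (z : ℝ × ℝ).1 = 0 ∨ toothRamp n (z : ℝ × ℝ).1 = 1) :
    combToCircle n z = upperChart (toothRamp n (z : ℝ × ℝ).1) (z : ℝ × ℝ).2 := by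
  simp only [combToCircle, ContinuousMap.coe_mk]
  split_ifs with h
  · exact (coe_upperChart_eq_coe_lowerChart (hz.resolve_left h.not_gt) _).symm
  · rfl

lemma combToCircle_apply_eq_lowerChart {n : ℕ} {z : comb}
    (hz : (z : ℝ × ℝ).2 ≤ 1 / 2 ∨ toothRamp n (z : ℝ × ℝ).1 = 0 ∨ toothRamp n (z : ℝ × ℝ).1 = 1) :
    combToCircle n z = lowerChart (toothRamp n (z : ℝ × ℝ).1) (z : ℝ × ℝ).2 := by
  simp only [combToCircle, ContinuousMap.coe_mk]
  split_ifs with h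
  · rfl
  · exact coe_upperChart_eq_coe_lowerChart (hz.resolve_left h) _

/- Up the tooth `0`, along the top bar to `c`, down the tooth `c` and back along the bottom bar,
each leg in a quarter of the time. -/
def loopWidth (t : ℝ) : ℝ := max 0 (min 1 (min (4 * t - 1) (4 - 4 * t)))

def loopHeight (t : ℝ) : ℝ := max 0 (min 1 (min (4 * t) (3 - 4 * t)))

@[fun_prop]
lemma continuous_loopWidth : Continuous loopWidth := by unfold loopWidth; fun_prop

@[fun_prop]
lemma continuous_loopHeight : Continuous loopHeight := by unfold loopHeight; fun_prop

lemma loopWidth_mem_Icc (t : ℝ) : loopWidth t ∈ Icc 0 1 :=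
  ⟨le_max_left _ _, max_le zero_le_one (min_le_left _ _)⟩

lemma loopHeight_mem_Icc (t : ℝ) : loopHeight t ∈ Icc 0 1 :=
  ⟨le_max_left _ _, max_le zero_le_one (min_le_left _ _)⟩

lemma loopWidth_eq_zero {t : ℝ} (ht : t ≤ 1 / 4) : loopWidth t = 0 :=
  max_eq_left (min_le_of_right_le (min_le_of_left_le (by linarith)))

@[simp]
lemma loopWidth_zero : loopWidth 0 = 0 := loopWidth_eq_zero (by norm_num)

@[simp]
lemma loopWidth_one : loopWidth 1 = 0 :=
  max_eq_left (min_le_of_right_le (min_le_of_right_le (by norm_num)))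

lemma loopWidth_eq_one {t : ℝ} (h₁ : 1 / 2 ≤ t) (h₂ : t ≤ 3 / 4) : loopWidth t = 1 :=
  (congrArg _ (min_eq_left (le_min (by linarith) (by linarith)))).trans (max_eq_right zero_le_one)

@[simp]
lemma loopHeight_zero : loopHeight 0 = 0 :=
  max_eq_left (min_le_of_right_le (min_le_of_left_le (by norm_num)))

lemma loopHeight_eq_zero {t : ℝ} (ht : 3 / 4 ≤ t) : loopHeight t = 0 :=
  max_eq_left (min_le_of_right_le (min_le_of_right_le (by linarith)))

@[simp]
lemma loopHeight_one : loopHeight 1 = 0 := loopHeight_eq_zero (by norm_num)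

lemma loopHeight_eq_one {t : ℝ} (h₁ : 1 / 4 ≤ t) (h₂ : t ≤ 1 / 2) : loopHeight t = 1 :=
  (congrArg _ (min_eq_left (le_min (by linarith) (by linarith)))).trans (max_eq_right zero_le_one)

lemma rectLoop_mem {c : ℝ} (hc : c ∈ combTeeth) (t : ℝ) :
    (c * loopWidth t, loopHeight t) ∈ comb := by
  have hcw : c * loopWidth t ∈ Icc 0 1 :=
    ⟨mul_nonneg (combTeeth_subset_Icc hc).1 (loopWidth_mem_Icc t).1,
      mul_le_one₀ (combTeeth_subset_Icc hc).2 (loopWidth_mem_Icc t).1 (loopWidth_mem_Icc t).2⟩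
  rcases le_total t (1 / 4) with h₁ | h₁
  · rw [loopWidth_eq_zero h₁, mul_zero]
    exact tooth_subset_comb zero_mem_combTeeth ⟨rfl, loopHeight_mem_Icc t⟩
  rcases le_total t (1 / 2) with h₂ | h₂
  · rw [loopHeight_eq_one h₁ h₂]
    exact bar_subset_comb (Or.inr rfl) ⟨hcw, rfl⟩
  rcases le_total t (3 / 4) with h₃ | h₃
  · rw [loopWidth_eq_one h₂ h₃, mul_one]
    exact tooth_subset_comb hc ⟨rfl, loopHeight_mem_Icc t⟩
  · rw [loopHeight_eq_zero h₃]
    exact bar_subset_comb (Or.inl rfl) ⟨hcw, rfl⟩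

def rectLoop (c : combTeeth) : Path combP combP where
  toFun t := ⟨((c : ℝ) * loopWidth t, loopHeight t), rectLoop_mem c.2 t⟩
  continuous_toFun := by fun_prop
  source' := by ext <;> simp [combP]
  target' := by ext <;> simp [combP]

lemma continuous_rectLoop : Continuous rectLoop := by
  refine Path.continuous_uncurry_iff.1 (Continuous.subtype_mk ?_ _)
  fun_prop

lemma tendsto_rectLoop :
    Tendsto (fun n => rectLoop (combTooth n)) atTop (𝓝 (rectLoop ⟨0, zero_mem_combTeeth⟩)) :=
  (continuous_rectLoop.tendsto _).comp
    (tendsto_subtype_rng.2 tendsto_one_div_add_atTop_nhds_zero_nat)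

lemma combToCircle_rectLoop_zero (n : ℕ) (t : I) :
    combToCircle n (rectLoop ⟨0, zero_mem_combTeeth⟩ t) = (loopHeight t / 4 : ℝ) := by
  rw [combToCircle_apply_eq_upperChart] <;> simp [rectLoop, upperChart]

noncomputable def rectLoopLift (n : ℕ) : C(I, ℝ) where
  toFun t :=
    let z := (rectLoop (combTooth n) t : ℝ × ℝ)
    if (t : ℝ) ≤ 1 / 2 then upperChart (toothRamp n z.1) z.2 else lowerChart (toothRamp n z.1) z.2
  continuous_toFun := by
    refine Continuous.if_le ?_ ?_ continuous_subtype_val continuous_const fun t ht => ?_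
    · unfold upperChart; fun_prop
    · unfold lowerChart; fun_prop
    · have hw : loopWidth t = 1 := loopWidth_eq_one ht.ge (by rw [ht]; norm_num)
      have hh : loopHeight t = 1 := loopHeight_eq_one (by rw [ht]; norm_num) ht.le
      norm_num [rectLoop, combTooth, hw, hh, toothRamp_eq_one, upperChart, lowerChart]

lemma combToCircle_rectLoop_succ (n : ℕ) (t : I) :
    combToCircle n (rectLoop (combTooth n) t) = (rectLoopLift n t : AddCircle (1 : ℝ)) := by
  simp only [rectLoopLift, ContinuousMap.coe_mk]
  split_ifs with h₂
  · refine combToCircle_apply_eq_upperChart ?_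
    rcases le_total (t : ℝ) (1 / 4) with h₁ | h₁
    · simp [rectLoop, loopWidth_eq_zero h₁]
    · norm_num [rectLoop, loopHeight_eq_one h₁ h₂]
  · refine combToCircle_apply_eq_lowerChart ?_
    rcases le_total (t : ℝ) (3 / 4) with h₃ | h₃
    · simp [rectLoop, combTooth, loopWidth_eq_one (not_le.1 h₂).le h₃, toothRamp_eq_one]
    · simp [rectLoop, loopHeight_eq_zero h₃]

lemma rectLoop_not_homotopic (n : ℕ) :
    ¬ (rectLoop (combTooth n)).Homotopic (rectLoop ⟨0, zero_mem_combTeeth⟩) := by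
  intro h
  have := (AddCircle.isCoveringMap_coe (1 : ℝ)).eq_of_homotopic_of_lifts (h.map (combToCircle n))
    (Γ₀ := rectLoopLift n) (Γ₁ := ⟨fun t => loopHeight t / 4, by fun_prop⟩)
    (fun t => (combToCircle_rectLoop_succ n t).symm)
    (fun t => (combToCircle_rectLoop_zero n t).symm) (by simp [rectLoopLift, rectLoop, upperChart])
  norm_num [rectLoopLift, rectLoop, lowerChart] at this

/-- The topological fundamental group of the comb space is not discrete, even though the
comb space is semilocally simply connected at every point. -/
theorem stmt3 : ¬ DiscreteTopology (ZerothHomotopy (Path combP combP)) ∧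
    ∀ x : comb, SemilocallySimplyConnectedAt ↥comb x := by
  refine ⟨fun _ => ?_, semilocallySimplyConnectedAt_comb⟩
  obtain ⟨n, hn⟩ := (tendsto_rectLoop.eventually
    ((isOpen_setOf_joined _).mem_nhds (Joined.refl _))).exists
  exact rectLoop_not_homotopic n (.of_joined hn)
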